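/- arXiv:2212.13562 — 3 statements merged into one kernel-verified Lean document; each statement's English description precedes it below -/
import Mathlib

section
/- Let Ω be a finite alphabet, P a finite probability space on Ω, and let a, b be distinct elements of Ω. Let α ∈ Ω^∞ be Schnorr P-random, and let β be the infinite sequence over Ω \ {b} obtained by replacing every occurrence of b in α by a. Then β is Schnorr Q-random, where Q is the finite probability space on Ω \ {b} given by Q(a) = P(a) + P(b) and Q(x) = P(x) for x ≠ a. -/
open MeasureTheory

namespace AR

variable {Ω : Type} [Fintype Ω] [DecidableEq Ω] [Primcodable Ω] [MeasurableSpace Ω]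

/-- The length-`n` prefix `α↾n` of an infinite sequence `α`. -/
def restrict (α : ℕ → Ω) (n : ℕ) : List Ω := List.ofFn (fun i : Fin n => α i)

/-- The open set `[S]^≺` generated by a set of strings `S`:
all infinite sequences having some prefix in `S`. -/
def cyl (S : Set (List Ω)) : Set (ℕ → Ω) := {α | ∃ n, restrict α n ∈ S}

/-- The `n`-th section `C_n` of a set `C ⊆ ℕ × Ω*`. -/
def sec (C : Set (ℕ × List Ω)) (n : ℕ) : Set (List Ω) := {σ | (n, σ) ∈ C}

/-- `S` is prefix-free: no string of `S` is a proper prefix of another string of `S`. -/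
def PrefixFree (S : Set (List Ω)) : Prop :=
  ∀ σ ∈ S, ∀ τ ∈ S, σ <+: τ → σ = τ

/-- `P` is a finite probability space on the alphabet `Ω`. -/
def IsFPS (P : Ω → ℝ) : Prop := (∀ a, 0 ≤ P a) ∧ ∑ a, P a = 1

/-- `μ` is the Bernoulli measure `λ_P` on `Ω^∞`: the measure of the cylinder
`[σ]^≺` is `P(σ(1)) ⋯ P(σ(n))`. -/
def IsBernoulli (P : Ω → ℝ) (μ : Measure (ℕ → Ω)) : Prop :=
  ∀ σ : List Ω, μ (cyl {σ}) = ENNReal.ofReal ((σ.map P).prod)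

/-- A Martin-Löf `P`-test (for the Bernoulli measure `μ = λ_P`): an r.e. subset `C`
of `ℕ⁺ × Ω*` with `μ [C_n]^≺ < 2⁻ⁿ` for all `n ≥ 1`. -/
def IsMLTest (μ : Measure (ℕ → Ω)) (C : Set (ℕ × List Ω)) : Prop :=
  REPred (· ∈ C) ∧ ∀ n : ℕ, 1 ≤ n → μ (cyl (sec C n)) < (2 ^ n)⁻¹

/-- A real is computable if some computable sequence of rationals converges to it
at rate `2⁻ᵏ`. -/
def IsComputableReal (x : ℝ) : Prop :=
  ∃ f : ℕ → ℚ, Computable f ∧ ∀ k : ℕ, |x - (f k : ℝ)| < ((2 : ℝ) ^ k)⁻¹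

/-- A Schnorr `P`-test: a Martin-Löf `P`-test whose measures `μ [C_n]^≺` are
uniformly computable in `n`. -/
def IsSchnorrTest (μ : Measure (ℕ → Ω)) (C : Set (ℕ × List Ω)) : Prop :=
  IsMLTest μ C ∧ ∃ f : ℕ → ℕ → ℚ, Computable₂ f ∧
    ∀ n : ℕ, 1 ≤ n → ∀ k : ℕ,
      |(μ (cyl (sec C n))).toReal - (f n k : ℝ)| < ((2 : ℝ) ^ k)⁻¹

/-- `α` is Martin-Löf `P`-random: it passes every Martin-Löf `P`-test. -/
def MLRandom (μ : Measure (ℕ → Ω)) (α : ℕ → Ω) : Prop :=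
  ∀ C : Set (ℕ × List Ω), IsMLTest μ C → ∃ n : ℕ, 1 ≤ n ∧ α ∉ cyl (sec C n)

/-- `α` is Schnorr `P`-random: it passes every Schnorr `P`-test. -/
def SchnorrRandom (μ : Measure (ℕ → Ω)) (α : ℕ → Ω) : Prop :=
  ∀ C : Set (ℕ × List Ω), IsSchnorrTest μ C → ∃ n : ℕ, 1 ≤ n ∧ α ∉ cyl (sec C n)


instance {Ω : Type} [Primcodable Ω] [DecidableEq Ω] (b : Ω) :
    Primcodable {x : Ω // x ≠ b} :=
  Primcodable.subtype (PrimrecPred.not (Primrec.eq.comp Primrec.id (Primrec.const b)))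

/-!
The contraction `φ` (sending `b` to `a`) pushes `λ_P` forward to `λ_Q`. On a set determined by
the first `N` letters both measures are sums of product weights, and summing `P` over the
fibres of `φ` gives `Q`; continuity from below extends this to every open set `[S]^≺`. So a
Schnorr `Q`-test `C` pulls back along the computable map `φ` to a Schnorr `P`-test with the
same measures, and `β = φ ∘ α` lies in `[C_n]^≺` exactly when `α` lies in the `n`-th level
of the pulled-back test.
-/

open Finset

section Prefixes

variable {A B : Type}

lemma restrict_map (φ : A → B) (α : ℕ → A) (n : ℕ) :
    (restrict α n).map φ = restrict (fun i => φ (α i)) n := by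
  simp [restrict, List.map_ofFn, Function.comp_def]

lemma restrict_eq_take {N n : ℕ} (h : n ≤ N) (α : ℕ → A) :
    restrict α n = (List.ofFn fun i : Fin N => α i).take n :=
  Fin.ofFn_take_eq_take_ofFn h (fun i : Fin N => α i)

lemma cyl_singleton_ofFn {N : ℕ} (g : Fin N → A) :
    cyl {List.ofFn g} = {α | (fun i : Fin N => α i) = g} := by
  ext α
  constructor
  · rintro ⟨n, hn⟩
    obtain rfl : n = N := by simpa [restrict] using congrArg List.length hn
    exact List.ofFn_injective hn
  · rintro rfl
    exact ⟨N, rfl⟩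

lemma cyl_eq_iUnion (S : Set (List A)) : cyl S = ⋃ n, {α | restrict α n ∈ S} := by
  ext α
  simp [cyl]

lemma accumulate_restrict_mem (S : Set (List A)) (N : ℕ) :
    Set.accumulate (fun n => {α : ℕ → A | restrict α n ∈ S}) N =
      {α | (fun i : Fin N => α i) ∈ {g : Fin N → A | ∃ n ≤ N, (List.ofFn g).take n ∈ S}} := by
  ext α
  simp only [Set.mem_accumulate, Set.mem_ofPred_eq]
  exact exists_congr fun n => and_congr_right fun h => by rw [restrict_eq_take h]

end Prefixes

lemma IsFPS.sum_prod_ofReal {A : Type} [Fintype A] {P : A → ℝ} (hP : IsFPS P) (N : ℕ) :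
    ∑ g : Fin N → A, ∏ i, ENNReal.ofReal (P (g i)) = 1 := by
  rw [← Fintype.sum_pow (fun x => ENNReal.ofReal (P x)),
    ← ENNReal.ofReal_sum_of_nonneg fun x _ => hP.1 x, hP.2, ENNReal.ofReal_one, one_pow]

section Bernoulli

variable {A : Type} [MeasurableSpace A] {P : A → ℝ} {μ : Measure (ℕ → A)}

lemma IsBernoulli.measure_prefix_eq (hP : ∀ x, 0 ≤ P x) (hμ : IsBernoulli P μ) {N : ℕ}
    (g : Fin N → A) :
    μ {α | (fun i : Fin N => α i) = g} = ∏ i, ENNReal.ofReal (P (g i)) := by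
  rw [← cyl_singleton_ofFn, hμ, List.map_ofFn, List.prod_ofFn, Function.comp_def,
    ENNReal.ofReal_prod_of_nonneg fun i _ => hP (g i)]

lemma IsBernoulli.measure_univ (hμ : IsBernoulli P μ) : μ Set.univ = 1 := by
  have : cyl {([] : List A)} = Set.univ := Set.eq_univ_of_forall fun α => ⟨0, rfl⟩
  simpa [this] using hμ []

/- The cylinders need not be measurable (nothing is assumed of the σ-algebra on `A`), so only
subadditivity is available: the lower bound comes from the complement and `μ univ = 1`. -/
lemma IsBernoulli.measure_prefix_mem [Fintype A] (hP : IsFPS P) (hμ : IsBernoulli P μ) {N : ℕ}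
    (T : Finset (Fin N → A)) :
    μ {α | (fun i : Fin N => α i) ∈ T} = ∑ g ∈ T, ∏ i, ENNReal.ofReal (P (g i)) := by
  classical
  set w : (Fin N → A) → ENNReal := fun g => ∏ i, ENNReal.ofReal (P (g i))
  have upper : ∀ T : Finset (Fin N → A), μ {α | (fun i : Fin N => α i) ∈ T} ≤ ∑ g ∈ T, w g :=
    fun T => calc
      μ {α | (fun i : Fin N => α i) ∈ T} = μ (⋃ g ∈ T, {α | (fun i : Fin N => α i) = g}) := by
        congr 1; ext α; simp
      _ ≤ ∑ g ∈ T, μ {α | (fun i : Fin N => α i) = g} := measure_biUnion_finset_le _ _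
      _ = ∑ g ∈ T, w g := sum_congr rfl fun g _ => hμ.measure_prefix_eq hP.1 g
  have total : ∑ g ∈ T, w g + ∑ g ∈ Tᶜ, w g = 1 := by
    rw [sum_add_sum_compl]
    exact hP.sum_prod_ofReal N
  refine le_antisymm (upper T) (ENNReal.le_of_add_le_add_right (a := ∑ g ∈ Tᶜ, w g) ?_ ?_)
  · exact ne_top_of_le_ne_top ENNReal.one_ne_top (total ▸ le_add_self)
  calc ∑ g ∈ T, w g + ∑ g ∈ Tᶜ, w g = μ Set.univ := by rw [total, hμ.measure_univ]
    _ ≤ μ {α | (fun i : Fin N => α i) ∈ T} + μ {α | (fun i : Fin N => α i) ∈ Tᶜ} := by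
      refine (measure_mono fun α _ => ?_).trans (measure_union_le _ _)
      by_cases h : (fun i : Fin N => α i) ∈ T
      · exact Or.inl h
      · exact Or.inr (mem_compl.2 h)
    _ ≤ μ {α | (fun i : Fin N => α i) ∈ T} + ∑ g ∈ Tᶜ, w g := by gcongr; exact upper Tᶜ

end Bernoulli

section Pushforward

variable {A B : Type} [Fintype A] [DecidableEq B] (φ : A → B)

lemma sum_prod_filter_comp_mem {R : Type*} [CommSemiring R] (p : A → R) {N : ℕ}
    (T : Finset (Fin N → B)) :
    ∑ g : Fin N → A with (fun i => φ (g i)) ∈ T, ∏ i, p (g i) =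
      ∑ h ∈ T, ∏ i, ∑ x with φ x = h i, p x := by
  rw [← sum_fiberwise_eq_sum_filter univ T (fun (g : Fin N → A) i => φ (g i))]
  refine sum_congr rfl fun h _ => ?_
  rw [prod_univ_sum]
  congr 1
  ext g
  simp [funext_iff]

variable {φ} {P : A → ℝ} {Q : B → ℝ}

lemma IsFPS.of_sum_fiber [Fintype B] (hP : IsFPS P) (hQ : ∀ y, Q y = ∑ x with φ x = y, P x) :
    IsFPS Q :=
  ⟨fun y => hQ y ▸ sum_nonneg fun x _ => hP.1 x, by simp_rw [hQ]; rw [sum_fiberwise, hP.2]⟩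

variable [Fintype B] [MeasurableSpace A] [MeasurableSpace B]
  {μ : Measure (ℕ → A)} {ν : Measure (ℕ → B)}

lemma IsBernoulli.measure_prefix_map_mem (hP : IsFPS P) (hμ : IsBernoulli P μ)
    (hν : IsBernoulli Q ν) (hQ : ∀ y, Q y = ∑ x with φ x = y, P x) {N : ℕ}
    (U : Set (Fin N → B)) :
    μ {α | (fun i : Fin N => φ (α i)) ∈ U} = ν {β | (fun i : Fin N => β i) ∈ U} := by
  classical
  calc μ {α | (fun i : Fin N => φ (α i)) ∈ U}
      = μ {α | (fun i : Fin N => α i) ∈ ({g | (fun i => φ (g i)) ∈ U.toFinset} : Finset _)} := by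
        simp
    _ = ∑ h ∈ U.toFinset, ∏ i, ∑ x with φ x = h i, ENNReal.ofReal (P x) := by
        rw [hμ.measure_prefix_mem hP]
        exact sum_prod_filter_comp_mem φ (fun x => ENNReal.ofReal (P x)) U.toFinset
    _ = ∑ h ∈ U.toFinset, ∏ i, ENNReal.ofReal (Q (h i)) := by
        simp_rw [hQ, ENNReal.ofReal_sum_of_nonneg fun x _ => hP.1 x]
    _ = ν {β | (fun i : Fin N => β i) ∈ U} := by
        rw [← hν.measure_prefix_mem (hP.of_sum_fiber hQ)]
        simp

theorem IsBernoulli.measure_cyl_map (hP : IsFPS P) (hμ : IsBernoulli P μ)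
    (hν : IsBernoulli Q ν) (hQ : ∀ y, Q y = ∑ x with φ x = y, P x) (S : Set (List B)) :
    μ (cyl {σ | σ.map φ ∈ S}) = ν (cyl S) := by
  rw [cyl_eq_iUnion, cyl_eq_iUnion, measure_iUnion_eq_iSup_accumulate,
    measure_iUnion_eq_iSup_accumulate]
  refine iSup_congr fun N => ?_
  rw [accumulate_restrict_mem S N, ← hμ.measure_prefix_map_mem hP hν hQ]
  congr 1
  ext α
  simpa [Set.mem_accumulate, restrict_map] using
    Set.ext_iff.1 (accumulate_restrict_mem S N) fun i => φ (α i)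

end Pushforward

theorem SchnorrRandom.map {A B : Type} [Primcodable A] [Primcodable B] [MeasurableSpace A]
    [MeasurableSpace B] {μ : Measure (ℕ → A)} {ν : Measure (ℕ → B)} {φ : A → B}
    (hφ : Primrec φ) (hμν : ∀ S, μ (cyl {σ | σ.map φ ∈ S}) = ν (cyl S)) {α : ℕ → A}
    (hα : SchnorrRandom μ α) : SchnorrRandom ν fun i => φ (α i) := by
  rintro C ⟨⟨hC_re, hC_bound⟩, f, hf, hf_approx⟩
  let D : Set (ℕ × List A) := {x | (x.1, x.2.map φ) ∈ C}
  have hD_sec (n : ℕ) : μ (cyl (sec D n)) = ν (cyl (sec C n)) := hμν (sec C n)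
  have hD_re : REPred (· ∈ D) :=
    hC_re.comp (Primrec.fst.pair (Primrec.list_map Primrec.snd (hφ.comp Primrec.snd).to₂)).to_comp
  have hD : IsSchnorrTest μ D :=
    ⟨⟨hD_re, fun n hn => hD_sec n ▸ hC_bound n hn⟩, f, hf, fun n hn => hD_sec n ▸ hf_approx n hn⟩
  obtain ⟨n, hn, hα_n⟩ := hα D hD
  refine ⟨n, hn, fun ⟨m, hm⟩ => hα_n ⟨m, ?_⟩⟩
  change (n, (restrict α m).map φ) ∈ C
  rwa [restrict_map]

section Contraction

variable {A : Type} [DecidableEq A] (a b : A) (hab : a ≠ b)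

def contract (x : A) : {x : A // x ≠ b} :=
  ⟨if x = b then a else x, by split_ifs with h; exacts [hab, h]⟩

lemma primrec_contract [Primcodable A] : Primrec (contract a b hab) :=
  Primrec.subtype_mk (Primrec.ite (Primrec.eq.comp Primrec.id (Primrec.const b)) (Primrec.const a)
    Primrec.id)

variable {a b hab}

lemma sum_fiber_contract [Fintype A] {P : A → ℝ} {Q : {x : A // x ≠ b} → ℝ}
    (hQ : ∀ y : {x : A // x ≠ b}, Q y = if (y : A) = a then P a + P b else P y)
    (y : {x : A // x ≠ b}) : Q y = ∑ x with contract a b hab x = y, P x := by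
  have hfiber : ({x | contract a b hab x = y} : Finset A) =
      if (y : A) = a then {a, b} else {(y : A)} := by
    ext x
    have := y.2
    simp only [contract, Subtype.ext_iff, mem_filter, mem_univ, true_and]
    split_ifs <;> grind
  rw [hfiber, hQ]
  split_ifs
  · exact (sum_pair hab).symm
  · exact (sum_singleton _ _).symm

end Contraction

theorem schnorr_random_contraction_general {Ω : Type} [Fintype Ω]
    [DecidableEq Ω] [Primcodable Ω] [MeasurableSpace Ω]
    (P : Ω → ℝ) (μ : Measure (ℕ → Ω)) (hP : IsFPS P) (hμ : IsBernoulli P μ)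
    (α : ℕ → Ω) (hα : SchnorrRandom μ α) (a b : Ω) (hab : a ≠ b)
    (Q : {x : Ω // x ≠ b} → ℝ)
    (hQdef : ∀ x : {x : Ω // x ≠ b}, Q x = if (x : Ω) = a then P a + P b else P (x : Ω))
    (ν : Measure (ℕ → {x : Ω // x ≠ b})) (hν : IsBernoulli Q ν)
    (β : ℕ → {x : Ω // x ≠ b})
    (hβ : ∀ i : ℕ, (β i : Ω) = if α i = b then a else α i) :
    SchnorrRandom ν β := by
  obtain rfl : β = fun i => contract a b hab (α i) := funext fun i => Subtype.ext (hβ i)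
  exact hα.map (primrec_contract a b hab) (hμ.measure_cyl_map hP hν (sum_fiber_contract hQdef))

/-- replacing every occurrence of `b` by `a` in a Schnorr `P`-random
sequence yields a Schnorr `Q`-random sequence over `Ω \ {b}`, where
`Q a = P a + P b` and `Q x = P x` otherwise. -/
theorem schnorr_random_contraction {Ω : Type} [Fintype Ω] [Nonempty Ω]
    [DecidableEq Ω] [Primcodable Ω] [MeasurableSpace Ω]
    (P : Ω → ℝ) (μ : Measure (ℕ → Ω)) (hP : IsFPS P) (hμ : IsBernoulli P μ)
    (α : ℕ → Ω) (hα : SchnorrRandom μ α) (a b : Ω) (hab : a ≠ b)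
    (Q : {x : Ω // x ≠ b} → ℝ) (hQ : IsFPS Q)
    (hQdef : ∀ x : {x : Ω // x ≠ b}, Q x = if (x : Ω) = a then P a + P b else P (x : Ω))
    (ν : Measure (ℕ → {x : Ω // x ≠ b})) (hν : IsBernoulli Q ν)
    (β : ℕ → {x : Ω // x ≠ b})
    (hβ : ∀ i : ℕ, (β i : Ω) = if α i = b then a else α i) :
    SchnorrRandom ν β :=
  schnorr_random_contraction_general P μ hP hμ α hα a b hab Q hQdef ν hν β hβ

end AR
end

section
/- Let ε be a positive rational and L a positive integer, and define f(n) = ⌈n^{2+ε}⌉. Then there exists a total recursive function g : ℕ⁺ → ℕ⁺ such that for every m ≥ 1: g(m) ≥ L and ∑_{n=g(m)}^∞ ∑_{k=f(n)}^∞ exp(−k/n²) < 2^{−m−1}. -/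
/-!
Summing the geometric series in `k`, the inner sum at `n` is at most `(1 + n²) exp(-n^ε)`,
because `⌈n^{2+ε}⌉ / n² ≥ n^ε` and `(1 - e^{-y})⁻¹ ≤ 1 + y⁻¹`. Since `exp(-n^ε)` decays faster
than any power of `n`, this is eventually at most `1/n - 1/(n+1)`, so the tail from `N` on
telescopes to at most `1/N`. With `N₀` a threshold past which that bound holds,
`g m = max (max L N₀) (2^(m+2))` is primitive recursive and its tail is at most `2^{-m-2}`.
-/

open Real Filter Finset

def equivSubtypeLe (f : ℕ) : ℕ ≃ {k : ℕ // f ≤ k} where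
  toFun j := ⟨f + j, Nat.le_add_right f j⟩
  invFun k := k.1 - f
  left_inv j := Nat.add_sub_cancel_left (n := f) (m := j)
  right_inv k := Subtype.ext (Nat.add_sub_cancel' k.2)

theorem tsum_subtype_le_eq_tsum_add {α : Type*} [AddCommMonoid α] [TopologicalSpace α]
    (a : ℕ → α) (f : ℕ) : ∑' k : {k : ℕ // f ≤ k}, a k = ∑' j, a (f + j) :=
  ((equivSubtypeLe f).tsum_eq fun k => a k).symm

theorem tsum_subtype_le_geometric {r : ℝ} (h₀ : 0 ≤ r) (h₁ : r < 1) (f : ℕ) :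
    ∑' k : {k : ℕ // f ≤ k}, r ^ (k : ℕ) = r ^ f * (1 - r)⁻¹ := by
  simp_rw [tsum_subtype_le_eq_tsum_add (r ^ ·), pow_add, tsum_mul_left,
    tsum_geometric_of_lt_one h₀ h₁]

theorem inv_one_sub_exp_neg_le {y : ℝ} (hy : 0 < y) : (1 - exp (-y))⁻¹ ≤ 1 + y⁻¹ := by
  have hexp : y < exp y - 1 := by linarith [add_one_lt_exp hy.ne']
  have hrw : (1 - exp (-y))⁻¹ = 1 + (exp y - 1)⁻¹ := by
    rw [exp_neg]
    field_simp [(exp_pos y).ne', (hy.trans hexp).ne']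
    ring
  rw [hrw]
  gcongr

theorem tsum_exp_neg_div_le {x : ℝ} (hx : 0 < x) (f : ℕ) :
    ∑' k : {k : ℕ // f ≤ k}, exp (-(k : ℝ) / x) ≤ (1 + x) * exp (-(f : ℝ) / x) := by
  have hpow : ∀ k : ℕ, exp (-(k : ℝ) / x) = exp (-1 / x) ^ k := fun k => by
    rw [← exp_nat_mul]; ring_nf
  have hr : exp (-1 / x) < 1 := exp_lt_one_iff.2 (div_neg_of_neg_of_pos (by norm_num) hx)
  simp_rw [hpow, tsum_subtype_le_geometric (exp_pos _).le hr f, mul_comm (exp (-1 / x) ^ f)]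
  gcongr
  simpa [neg_div] using inv_one_sub_exp_neg_le (one_div_pos.2 hx)

theorem tsum_exp_neg_ceil_rpow_le {x : ℝ} (hx : 0 < x) (ε : ℝ) :
    ∑' k : {k : ℕ // ⌈x ^ (2 + ε)⌉₊ ≤ k}, exp (-(k : ℝ) / x ^ 2)
      ≤ (1 + x ^ 2) * exp (-x ^ ε) := by
  refine (tsum_exp_neg_div_le (by positivity) _).trans ?_
  gcongr
  rw [neg_div, neg_le_neg_iff, le_div_iff₀ (by positivity), mul_comm, ← rpow_two,
    ← rpow_add hx, add_comm]
  exact Nat.le_ceil _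

theorem eventually_one_add_sq_mul_exp_neg_rpow_le {ε : ℝ} (hε : 0 < ε) :
    ∀ᶠ n : ℕ in atTop, (1 + (n : ℝ) ^ 2) * exp (-(n : ℝ) ^ ε) ≤ (n : ℝ)⁻¹ - ((n : ℝ) + 1)⁻¹ := by
  have hdecay := (tendsto_rpow_mul_exp_neg_mul_atTop_nhds_zero (4 / ε) 1 one_pos).comp
    ((tendsto_rpow_atTop hε).comp tendsto_natCast_atTop_atTop)
  filter_upwards [hdecay.eventually (ge_mem_nhds (by norm_num : (0 : ℝ) < 1 / 4)),
    eventually_ge_atTop 1] with n hsmall hn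
  have hn' : (1 : ℝ) ≤ n := by exact_mod_cast hn
  have hquartic : (n : ℝ) ^ 4 * exp (-(n : ℝ) ^ ε) ≤ 1 / 4 := by
    simpa [← rpow_mul (Nat.cast_nonneg n), mul_div_cancel₀ _ hε.ne'] using hsmall
  calc (1 + (n : ℝ) ^ 2) * exp (-(n : ℝ) ^ ε)
      ≤ 2 * (n : ℝ) ^ 2 * exp (-(n : ℝ) ^ ε) := by gcongr; nlinarith
    _ = 2 / (n : ℝ) ^ 2 * ((n : ℝ) ^ 4 * exp (-(n : ℝ) ^ ε)) := by field_simp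
    _ ≤ 2 / (n : ℝ) ^ 2 * (1 / 4) := by gcongr
    _ ≤ 1 / ((n : ℝ) * ((n : ℝ) + 1)) := by
        rw [div_mul_div_comm, div_le_div_iff₀ (by positivity) (by positivity)]
        nlinarith
    _ = (n : ℝ)⁻¹ - ((n : ℝ) + 1)⁻¹ := by field_simp; ring

theorem eventually_tsum_exp_neg_ceil_rpow_le {ε : ℝ} (hε : 0 < ε) :
    ∀ᶠ n : ℕ in atTop, ∑' k : {k : ℕ // ⌈(n : ℝ) ^ (2 + ε)⌉₊ ≤ k}, exp (-(k : ℝ) / (n : ℝ) ^ 2)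
      ≤ (n : ℝ)⁻¹ - ((n : ℝ) + 1)⁻¹ := by
  filter_upwards [eventually_one_add_sq_mul_exp_neg_rpow_le hε, eventually_gt_atTop 0]
    with n hbound hn
  exact (tsum_exp_neg_ceil_rpow_le (Nat.cast_pos.2 hn) ε).trans hbound

theorem tsum_subtype_le_le_inv_of_le_inv_sub_inv {a : ℕ → ℝ} (N : ℕ) (ha₀ : ∀ n, 0 ≤ a n)
    (ha : ∀ n, N ≤ n → a n ≤ (n : ℝ)⁻¹ - ((n : ℝ) + 1)⁻¹) :
    ∑' n : {n : ℕ // N ≤ n}, a n ≤ (N : ℝ)⁻¹ := by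
  rw [tsum_subtype_le_eq_tsum_add]
  refine Real.tsum_le_of_sum_range_le (fun j => ha₀ _) fun J => ?_
  calc ∑ j ∈ range J, a (N + j)
      ≤ ∑ j ∈ range J, (((N + j : ℕ) : ℝ)⁻¹ - ((N + (j + 1) : ℕ) : ℝ)⁻¹) := by
        refine sum_le_sum fun j _ => ?_
        simpa [add_assoc] using ha (N + j) (Nat.le_add_right N j)
    _ = (N : ℝ)⁻¹ - ((N + J : ℕ) : ℝ)⁻¹ := by
        rw [sum_range_sub' (fun j => ((N + j : ℕ) : ℝ)⁻¹)]
        simp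
    _ ≤ (N : ℝ)⁻¹ := sub_le_self _ (by positivity)

theorem primrec₂_nat_pow : Primrec₂ ((· ^ ·) : ℕ → ℕ → ℕ) :=
  Primrec₂.unpaired'.mp Nat.Primrec.pow

theorem computable_modulus_double_sum_general (ε : ℚ) (hε : 0 < ε) (L : ℕ) :
    ∃ g : ℕ → ℕ, Computable g ∧ ∀ m : ℕ, 1 ≤ m → L ≤ g m ∧
      (∑' n : {n : ℕ // g m ≤ n}, ∑' k : {k : ℕ // ⌈((n.1 : ℝ)) ^ (2 + (ε : ℝ))⌉₊ ≤ k},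
          Real.exp (-(k.1 : ℝ) / (n.1 : ℝ) ^ 2))
        < ((2 : ℝ) ^ (m + 1))⁻¹ := by
  obtain ⟨N₀, hN₀⟩ := eventually_atTop.1
    (eventually_tsum_exp_neg_ceil_rpow_le (ε := ε) (by exact_mod_cast hε))
  refine ⟨fun m => max (max L N₀) (2 ^ (m + 2)), ?_, fun m _ => ⟨?_, ?_⟩⟩
  · exact (Primrec.nat_max.comp (Primrec.const _)
      (primrec₂_nat_pow.comp (Primrec.const 2) (Primrec.nat_add.comp .id (.const 2)))).to_comp
  · exact (le_max_left _ _).trans (le_max_left _ _)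
  · have hpow : (2 : ℝ) ^ (m + 1) < ((max (max L N₀) (2 ^ (m + 2)) : ℕ) : ℝ) := by
      push_cast
      exact (pow_lt_pow_right₀ one_lt_two (by omega)).trans_le (le_max_right _ _)
    refine (tsum_subtype_le_le_inv_of_le_inv_sub_inv _ (fun n => tsum_nonneg fun k => (exp_pos _).le)
      fun n hn => hN₀ n ((le_max_right _ _).trans ((le_max_left _ _).trans hn))).trans_lt ?_
    exact inv_strictAnti₀ (by positivity) hpow

/-- a computable modulus for the tail of the double sum
`∑_{n≥g(m)} ∑_{k≥⌈n^{2+ε}⌉} exp(−k/n²)`, with `g(m) ≥ L`. -/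
theorem computable_modulus_double_sum (ε : ℚ) (hε : 0 < ε) (L : ℕ) (hL : 1 ≤ L) :
    ∃ g : ℕ → ℕ, Computable g ∧ ∀ m : ℕ, 1 ≤ m → L ≤ g m ∧
      (∑' n : {n : ℕ // g m ≤ n}, ∑' k : {k : ℕ // ⌈((n.1 : ℝ)) ^ (2 + (ε : ℝ))⌉₊ ≤ k},
          Real.exp (-(k.1 : ℝ) / (n.1 : ℝ) ^ 2))
        < ((2 : ℝ) ^ (m + 1))⁻¹ :=
  computable_modulus_double_sum_general ε hε L
end

section
/- Let X₁, X₂, … be i.i.d. random variables on a probability space (Ω, F, P) with a ≤ X₁ ≤ b almost surely for some reals a < b. Then almost surely there exists a primitive recursive function f : ℕ → ℕ such that for every n ≥ 1 and every k ≥ f(n), |(1/k)∑_{i=1}^k Xᵢ − E[X₁]| < 1/n. -/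
/-!
By Chebyshev, the partial sum `S_N` with `N = m⁴` deviates from `N·E[X₀]` by at least `m³` with
probability at most `Var[X₀] / m²`, which is summable; so by Borel–Cantelli, almost surely
`|S_{m⁴}/m⁴ - E[X₀]| < 1/m` for all `m ≥ M(ω)`. For a sequence bounded by `c`, the running mean
moves by at most `30c/m` between `m⁴` and `(m+1)⁴`, so `n ↦ (n·D + M)⁴` with `D > 30c + 1` is a
modulus of convergence, and it is primitive recursive whatever the constants `D` and `M` are.
-/

open Finset MeasureTheory ProbabilityTheory Filter

noncomputable def runningMean (Y : ℕ → ℝ) (k : ℕ) : ℝ := (1 / (k : ℝ)) * ∑ i ∈ range k, Y i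

lemma runningMean_sub_eq (Y : ℕ → ℝ) (μ : ℝ) {N : ℕ} (hN : N ≠ 0) :
    runningMean Y N - μ = (∑ i ∈ range N, Y i - N * μ) / N := by
  rw [runningMean]; field_simp

lemma abs_sum_le_of_abs_le {Y : ℕ → ℝ} {c : ℝ} (hY : ∀ i, |Y i| ≤ c) (s : Finset ℕ) :
    |∑ i ∈ s, Y i| ≤ s.card * c :=
  (abs_sum_le_sum_abs _ _).trans <| by simpa using sum_le_sum fun i _ => hY i

lemma abs_runningMean_sub_runningMean_le {Y : ℕ → ℝ} {c : ℝ} (hY : ∀ i, |Y i| ≤ c) {N k : ℕ}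
    (hN : 0 < N) (hNk : N ≤ k) :
    |runningMean Y k - runningMean Y N| ≤ 2 * c * (k - N) / N := by
  have hN' : (0 : ℝ) < N := by exact_mod_cast hN
  have hk' : (0 : ℝ) < k := by exact_mod_cast hN.trans_le hNk
  have hNk' : (N : ℝ) ≤ k := by exact_mod_cast hNk
  have hhead := abs_sum_le_of_abs_le hY (range N)
  have htail := abs_sum_le_of_abs_le hY (Ico N k)
  rw [card_range] at hhead
  rw [Nat.card_Ico, Nat.cast_sub hNk] at htail
  have hsplit : runningMean Y k - runningMean Y N
      = (∑ i ∈ Ico N k, Y i - (k - N) / N * ∑ i ∈ range N, Y i) / k := by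
    simp only [runningMean, ← sum_range_add_sum_Ico _ hNk]
    field_simp
    ring
  have hc : 0 ≤ c := (abs_nonneg _).trans (hY 0)
  have hd : (0 : ℝ) ≤ k - N := sub_nonneg.2 hNk'
  have hnum : |∑ i ∈ Ico N k, Y i - (k - N) / N * ∑ i ∈ range N, Y i| ≤ 2 * c * (k - N) :=
    calc _ ≤ |∑ i ∈ Ico N k, Y i| + |(k - N) / N * ∑ i ∈ range N, Y i| := abs_sub _ _
      _ = |∑ i ∈ Ico N k, Y i| + (k - N) / N * |∑ i ∈ range N, Y i| := by
          rw [abs_mul, abs_of_nonneg (div_nonneg hd hN'.le)]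
      _ ≤ (k - N) * c + (k - N) / N * (N * c) := by gcongr
      _ = 2 * c * (k - N) := by field_simp; ring
  rw [hsplit, abs_div, abs_of_pos hk', div_le_div_iff₀ hk' hN']
  calc _ ≤ 2 * c * (k - N) * N := by gcongr
    _ ≤ 2 * c * (k - N) * k := by gcongr

lemma Nat.le_sqrt_sqrt_iff {t k : ℕ} : t ≤ Nat.sqrt (Nat.sqrt k) ↔ t ^ 4 ≤ k := by
  rw [Nat.le_sqrt, Nat.le_sqrt]; ring_nf

lemma abs_runningMean_sub_runningMean_pow_four_le {Y : ℕ → ℝ} {c : ℝ} (hY : ∀ i, |Y i| ≤ c)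
    {m k : ℕ} (hm : 1 ≤ m) (hmk : m ^ 4 ≤ k) (hkm : k < (m + 1) ^ 4) :
    |runningMean Y k - runningMean Y (m ^ 4)| ≤ 30 * c / m := by
  have hc : 0 ≤ c := (abs_nonneg _).trans (hY 0)
  have hm' : (1 : ℝ) ≤ m := by exact_mod_cast hm
  have hgap : (k : ℝ) - m ^ 4 ≤ 15 * m ^ 3 := by
    have : (k : ℝ) < (m + 1) ^ 4 := by exact_mod_cast hkm
    nlinarith [pow_le_pow_left₀ zero_le_one hm' 2, pow_le_pow_left₀ zero_le_one hm' 3]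
  calc _ ≤ 2 * c * (k - m ^ 4) / m ^ 4 := by
        simpa using abs_runningMean_sub_runningMean_le hY (by positivity) hmk
    _ ≤ 2 * c * (15 * m ^ 3) / m ^ 4 := by gcongr
    _ = 30 * c / m := by field_simp; ring

lemma primrec_mul_add_pow (D M e : ℕ) : Primrec fun n : ℕ => (n * D + M) ^ e :=
  (Primrec₂.unpaired'.1 Nat.Primrec.pow).comp
    (Primrec.nat_add.comp (Primrec.nat_mul.comp Primrec.id (Primrec.const D)) (Primrec.const M))
    (Primrec.const e)

lemma exists_primrec_modulus_of_runningMean_pow_four {Y : ℕ → ℝ} {c μ : ℝ}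
    (hY : ∀ i, |Y i| ≤ c) (hrate : ∀ᶠ m : ℕ in atTop, |runningMean Y (m ^ 4) - μ| < 1 / m) :
    ∃ f : ℕ → ℕ, Primrec f ∧ ∀ n, 1 ≤ n → ∀ k, f n ≤ k → |runningMean Y k - μ| < 1 / n := by
  obtain ⟨M, hM⟩ := eventually_atTop.1 hrate
  obtain ⟨D, hD⟩ := exists_nat_gt (30 * c + 1)
  have hc : 0 ≤ c := (abs_nonneg _).trans (hY 0)
  have hD1 : 1 ≤ D := by exact_mod_cast (show (1 : ℝ) < D by linarith).le
  refine ⟨fun n => (n * D + M) ^ 4, primrec_mul_add_pow D M 4, fun n hn k hk => ?_⟩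
  set m := Nat.sqrt (Nat.sqrt k)
  have hmk : m ^ 4 ≤ k := Nat.le_sqrt_sqrt_iff.1 le_rfl
  have hkm : k < (m + 1) ^ 4 :=
    lt_of_not_ge fun h => (Nat.le_sqrt_sqrt_iff.2 h).not_gt m.lt_succ_self
  have hnm : n * D + M ≤ m := Nat.le_sqrt_sqrt_iff.2 hk
  have hnDm : n * D ≤ m := (Nat.le_add_right _ _).trans hnm
  have hm : 1 ≤ m := (Nat.one_le_iff_ne_zero.2 (by positivity)).trans hnDm
  have hm' : (0 : ℝ) < m := by exact_mod_cast hm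
  have hn' : (0 : ℝ) < n := by exact_mod_cast hn
  have hnDm' : (n : ℝ) * D ≤ m := by exact_mod_cast hnDm
  calc _ ≤ |runningMean Y k - runningMean Y (m ^ 4)| + |runningMean Y (m ^ 4) - μ| :=
        abs_sub_le _ _ _
    _ < 30 * c / m + 1 / m :=
        add_lt_add_of_le_of_lt (abs_runningMean_sub_runningMean_pow_four_le hY hm hmk hkm)
          (hM m ((Nat.le_add_left _ _).trans hnm))
    _ = (30 * c + 1) / m := by ring
    _ < D / m := by gcongr
    _ ≤ 1 / n := by rw [div_le_div_iff₀ hm' hn']; linarith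

section IdentDistrib

variable {Ω : Type*} [MeasurableSpace Ω] {P : Measure Ω} {X : ℕ → Ω → ℝ}

lemma integral_sum_range_of_identDistrib (hX0 : Integrable (X 0) P)
    (hident : ∀ i, IdentDistrib (X i) (X 0) P P) (N : ℕ) :
    ∫ ω, ∑ i ∈ range N, X i ω ∂P = N * ∫ ω, X 0 ω ∂P := by
  rw [integral_finsetSum _ fun i _ => (hident i).integrable_iff.2 hX0]
  simp [fun i => (hident i).integral_eq]

lemma variance_sum_range_of_identDistrib (hX0 : MemLp (X 0) 2 P)
    (hident : ∀ i, IdentDistrib (X i) (X 0) P P)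
    (hindep : Pairwise fun i j => IndepFun (X i) (X j) P) (N : ℕ) :
    variance (∑ i ∈ range N, X i) P = N * variance (X 0) P := by
  rw [IndepFun.variance_sum (fun i _ => (hident i).memLp_iff.2 hX0) fun i _ j _ hij => hindep hij]
  simp [fun i => (hident i).variance_eq]

lemma measure_le_abs_sum_range_sub_le [IsFiniteMeasure P] (hX0 : MemLp (X 0) 2 P)
    (hident : ∀ i, IdentDistrib (X i) (X 0) P P)
    (hindep : Pairwise fun i j => IndepFun (X i) (X j) P) (N : ℕ) {ε : ℝ} (hε : 0 < ε) :
    P {ω | ε ≤ |∑ i ∈ range N, X i ω - N * ∫ ω, X 0 ω ∂P|}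
      ≤ ENNReal.ofReal (N * variance (X 0) P / ε ^ 2) := by
  have := meas_ge_le_variance_div_sq
    (memLp_finsetSum' (range N) fun i _ => (hident i).memLp_iff.2 hX0) hε
  simp only [Finset.sum_apply] at this
  rwa [variance_sum_range_of_identDistrib hX0 hident hindep,
    integral_sum_range_of_identDistrib (hX0.integrable one_le_two) hident] at this

lemma ae_eventually_abs_runningMean_pow_four_sub_lt [IsFiniteMeasure P] (hX0 : MemLp (X 0) 2 P)
    (hident : ∀ i, IdentDistrib (X i) (X 0) P P)
    (hindep : Pairwise fun i j => IndepFun (X i) (X j) P) :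
    ∀ᵐ ω ∂P, ∀ᶠ m : ℕ in atTop, |runningMean (X · ω) (m ^ 4) - ∫ ω, X 0 ω ∂P| < 1 / m := by
  set μ := ∫ ω, X 0 ω ∂P
  let s : ℕ → Set Ω := fun m =>
    {ω | ((m + 1 : ℕ) : ℝ) ^ 3 ≤ |∑ i ∈ range ((m + 1) ^ 4), X i ω - ((m + 1) ^ 4 : ℕ) * μ|}
  have hs (m : ℕ) :
      P (s m) ≤ ENNReal.ofReal (variance (X 0) P * (1 / ((m + 1 : ℕ) : ℝ) ^ 2)) := by
    refine (measure_le_abs_sum_range_sub_le hX0 hident hindep _ (by positivity)).trans_eq ?_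
    congr 1
    push_cast
    field_simp
  have hsummable : Summable fun m : ℕ => variance (X 0) P * (1 / ((m + 1 : ℕ) : ℝ) ^ 2) :=
    ((summable_nat_add_iff 1).2 (Real.summable_one_div_nat_pow.2 one_lt_two)).mul_left _
  have hsum : ∑' m, P (s m) ≠ ⊤ := by
    refine ((ENNReal.tsum_le_tsum hs).trans_lt ?_).ne
    rw [← ENNReal.ofReal_tsum_of_nonneg
      (fun _ => mul_nonneg (variance_nonneg _ _) (by positivity)) hsummable]
    exact ENNReal.ofReal_lt_top
  filter_upwards [ae_eventually_notMem hsum] with ω hω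
  filter_upwards [eventually_ge_atTop 1, (tendsto_sub_atTop_nat 1).eventually hω] with m hm hms
  obtain ⟨j, rfl⟩ : ∃ j, m = j + 1 := ⟨m - 1, by omega⟩
  have hj : (0 : ℝ) < ((j + 1 : ℕ) : ℝ) := by positivity
  simp only [s, Set.mem_ofPred_eq, not_le, Nat.add_sub_cancel] at hms
  rw [runningMean_sub_eq _ _ (by positivity), abs_div, Nat.abs_cast,
    div_lt_div_iff₀ (by positivity) hj]
  push_cast at hms ⊢
  nlinarith

end IdentDistrib

theorem slln_primitive_recursive_modulus_general {Ω : Type} [MeasurableSpace Ω]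
    (P : Measure Ω) [IsProbabilityMeasure P] (X : ℕ → Ω → ℝ)
    (hindep : iIndepFun X P)
    (hident : ∀ i, IdentDistrib (X i) (X 0) P P)
    (a b : ℝ)
    (hbdd : ∀ᵐ ω ∂P, a ≤ X 0 ω ∧ X 0 ω ≤ b) :
    ∀ᵐ ω ∂P, ∃ f : ℕ → ℕ, Primrec f ∧
      ∀ n : ℕ, 1 ≤ n → ∀ k : ℕ, 1 ≤ k → f n ≤ k →
        |(1 / (k : ℝ)) * ∑ i ∈ Finset.range k, X i ω - ∫ x, X 0 x ∂P|
          < 1 / (n : ℝ) := by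
  set c := max |a| |b|
  have hbound0 : ∀ᵐ ω ∂P, |X 0 ω| ≤ c := hbdd.mono fun ω h => abs_le_max_abs_abs h.1 h.2
  have hbound (i : ℕ) : ∀ᵐ ω ∂P, |X i ω| ≤ c :=
    (hident i).symm.ae_snd (measurableSet_le continuous_abs.measurable measurable_const) hbound0
  have hX0 : MemLp (X 0) 2 P :=
    MemLp.of_bound (hident 0).aemeasurable_fst.aestronglyMeasurable c hbound0
  filter_upwards [ae_eventually_abs_runningMean_pow_four_sub_lt hX0 hident
    (fun i j hij => hindep.indepFun hij), ae_all_iff.2 hbound] with ω hrate hωbound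
  obtain ⟨f, hf, hmod⟩ := exists_primrec_modulus_of_runningMean_pow_four hωbound hrate
  exact ⟨f, hf, fun n hn k _ hk => hmod n hn k hk⟩

/-- almost surely there is a primitive recursive modulus of
convergence in the strong law of large numbers for bounded i.i.d. variables. -/
theorem slln_primitive_recursive_modulus {Ω : Type} [MeasurableSpace Ω]
    (P : Measure Ω) [IsProbabilityMeasure P] (X : ℕ → Ω → ℝ)
    (hmeas : ∀ i, Measurable (X i))
    (hindep : iIndepFun X P)
    (hident : ∀ i, IdentDistrib (X i) (X 0) P P)
    (a b : ℝ) (hab : a < b)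
    (hbdd : ∀ᵐ ω ∂P, a ≤ X 0 ω ∧ X 0 ω ≤ b) :
    ∀ᵐ ω ∂P, ∃ f : ℕ → ℕ, Primrec f ∧
      ∀ n : ℕ, 1 ≤ n → ∀ k : ℕ, 1 ≤ k → f n ≤ k →
        |(1 / (k : ℝ)) * ∑ i ∈ Finset.range k, X i ω - ∫ x, X 0 x ∂P|
          < 1 / (n : ℝ) :=
  slln_primitive_recursive_modulus_general P X hindep hident a b hbdd
end
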